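/- arXiv:1801.09014 — 3 statements merged into one kernel-verified Lean document; each statement's English description precedes it below -/
import Mathlib

section
/- Let a < b be real numbers and let P : [a,b] → [a,b] be continuously differentiable and injective. Then for every x ∈ [a,b], the discrete ω-limit set ω_d(x) of the iteration x_{n+1} = P(x_n) is either a single fixed point of P or a two-point periodic orbit of P. Equivalently, the even iterates P^(2n)(x) converge to some p ∈ [a,b] with P(P(p)) = p, so every trajectory of the iteration approaches a periodic orbit of period at most 2. -/
open Filter Topology Function

/-- Auxiliary: a monotone-on-`[a,b]` continuous self-map has convergent orbits. -/
lemma aux_monotone_orbit_converges (a b : ℝ) (Q : ℝ → ℝ)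
    (hmaps : Set.MapsTo Q (Set.Icc a b) (Set.Icc a b))
    (hcont : ContinuousOn Q (Set.Icc a b))
    (hmono : MonotoneOn Q (Set.Icc a b))
    (x : ℝ) (hx : x ∈ Set.Icc a b) :
    ∃ p ∈ Set.Icc a b, Q p = p ∧
      Tendsto (fun n : ℕ => Q^[n] x) atTop (𝓝 p) := by
  have hmem : ∀ n, Q^[n] x ∈ Set.Icc a b := by
    intro n
    induction n with
    | zero => exact hx
    | succ n ih => rw [Function.iterate_succ_apply']; exact hmaps ih
  have hstep : ∀ n, Q^[n + 1] x = Q (Q^[n] x) := fun n => Function.iterate_succ_apply' Q n x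
  have key : ∀ (p : ℝ), Tendsto (fun n : ℕ => Q^[n] x) atTop (𝓝 p) →
      p ∈ Set.Icc a b ∧ Q p = p := by
    intro p hp
    have hpmem : p ∈ Set.Icc a b :=
      isClosed_Icc.mem_of_tendsto hp (Eventually.of_forall hmem)
    refine ⟨hpmem, ?_⟩
    have h1 : Tendsto (fun n => Q (Q^[n] x)) atTop (𝓝 (Q p)) :=
      (hcont p hpmem).tendsto.comp
        (tendsto_nhdsWithin_iff.2 ⟨hp, Eventually.of_forall hmem⟩)
    have h2 : Tendsto (fun n => Q^[n + 1] x) atTop (𝓝 p) :=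
      hp.comp (tendsto_add_atTop_nat 1)
    have h2' : Tendsto (fun n => Q (Q^[n] x)) atTop (𝓝 p) := by
      simpa only [hstep] using h2
    exact tendsto_nhds_unique h1 h2'
  rcases le_total (Q^[0] x) (Q^[1] x) with h01 | h01
  · have hm : Monotone (fun n : ℕ => Q^[n] x) := by
      refine monotone_nat_of_le_succ ?_
      intro n
      induction n with
      | zero => exact h01
      | succ n ih =>
        have h := hmono (hmem n) (hmem (n + 1)) ih
        rw [← hstep n, ← hstep (n + 1)] at h
        exact h
    have hbdd : BddAbove (Set.range (fun n : ℕ => Q^[n] x)) :=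
      ⟨b, by rintro _ ⟨n, rfl⟩; exact (hmem n).2⟩
    have ht := tendsto_atTop_ciSup hm hbdd
    obtain ⟨h1, h2⟩ := key _ ht
    exact ⟨_, h1, h2, ht⟩
  · have hm : Antitone (fun n : ℕ => Q^[n] x) := by
      refine antitone_nat_of_succ_le ?_
      intro n
      induction n with
      | zero => exact h01
      | succ n ih =>
        have h := hmono (hmem (n + 1)) (hmem n) ih
        rw [← hstep n, ← hstep (n + 1)] at h
        exact h
    have hbdd : BddBelow (Set.range (fun n : ℕ => Q^[n] x)) :=
      ⟨a, by rintro _ ⟨n, rfl⟩; exact (hmem n).1⟩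
    have ht := tendsto_atTop_ciInf hm hbdd
    obtain ⟨h1, h2⟩ := key _ ht
    exact ⟨_, h1, h2, ht⟩

/-- Paper's Lemma (le:single): for a `C¹` injective self-map `P` of `[a,b]`, every orbit
of the iteration `x_{n+1} = P(x_n)` approaches a periodic orbit of period at most 2:
the even iterates `P^[2n] x` converge to a point `p` with `P (P p) = p`, so the discrete
ω-limit set of `x` is a single fixed point or a two-point periodic orbit of `P`. -/
theorem injective_C1_interval_map_omega_limit_periodic
    (a b : ℝ) (hab : a < b) (P : ℝ → ℝ)
    (hmaps : Set.MapsTo P (Set.Icc a b) (Set.Icc a b))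
    (hC1 : ContDiffOn ℝ 1 P (Set.Icc a b))
    (hinj : Set.InjOn P (Set.Icc a b))
    (x : ℝ) (hx : x ∈ Set.Icc a b) :
    ∃ p ∈ Set.Icc a b, P (P p) = p ∧
      Tendsto (fun n : ℕ => P^[2 * n] x) atTop (𝓝 p) := by
  have hPc : ContinuousOn P (Set.Icc a b) := hC1.continuousOn
  set Q : ℝ → ℝ := fun y => P (P y) with hQ
  have hQmaps : Set.MapsTo Q (Set.Icc a b) (Set.Icc a b) := fun y hy => hmaps (hmaps hy)
  have hQcont : ContinuousOn Q (Set.Icc a b) := by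
    exact ContinuousOn.comp hPc hPc hmaps
  have hQmono : MonotoneOn Q (Set.Icc a b) := by
    rcases ContinuousOn.strictMonoOn_of_injOn_Icc' hab.le hPc hinj with hm | hm
    · intro u hu v hv huv
      exact hm.monotoneOn (hmaps hu) (hmaps hv) (hm.monotoneOn hu hv huv)
    · intro u hu v hv huv
      exact hm.antitoneOn (hmaps hv) (hmaps hu) (hm.antitoneOn hu hv huv)
  obtain ⟨p, hp, hfix, htend⟩ := aux_monotone_orbit_converges a b Q hQmaps hQcont hQmono x hx
  refine ⟨p, hp, hfix, ?_⟩
  have hiter : ∀ n : ℕ, P^[2 * n] x = Q^[n] x := by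
    intro n
    rw [Function.iterate_mul]
    rfl
  simpa only [hiter] using htend
end

section
/- Let X ⊆ ℝ² be open, f : X → ℝ² be C¹, and let Φ : ℝ × X → X be a C¹ map with ∂Φ/∂t(t,z) = f(Φ(t,z)) and Φ(0,z) = z for all (t,z) (the flow of f). Suppose: x, y ∈ X with f(x) ≠ 0 and f(y) ≠ 0; T > 0 with Φ(T, y) = x; σ : (−ε,ε) → X is a C¹ regular curve (a local parametrization of the impact surface S) with σ(0) = x and det(f(x), σ'(0)) ≠ 0; D : X → X is C¹ (the impact map) with D(x) = y; and τ, P : (−ε,ε) → ℝ are differentiable at 0 with τ(0) = T, P(0) = 0, and Φ(τ(u), D(σ(u))) = σ(P(u)) for all u ∈ (−ε,ε) (so P is the hybrid Poincaré return map in the coordinate u along S). Then the derivative of the Poincaré map satisfies P'(0) = [det(f(y), (D∘σ)'(0)) / det(f(x), σ'(0))] · exp(∫₀ᵀ (div f)(Φ(t,y)) dt), where div f = ∂f₁/∂x₁ + ∂f₂/∂x₂ and det(u,v) denotes the determinant of the 2×2 matrix with columns u and v. -/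
open Filter Topology

/-- Determinant of the `2×2` matrix with columns `u, v ∈ ℝ²`. -/
def det2 (u v : ℝ × ℝ) : ℝ := u.1 * v.2 - u.2 * v.1

/-- Divergence of a planar vector field `f` at a point `z`. -/
noncomputable def divergence2 (f : ℝ × ℝ → ℝ × ℝ) (z : ℝ × ℝ) : ℝ :=
  (fderiv ℝ f z (1, 0)).1 + (fderiv ℝ f z (0, 1)).2

/-!
Let `A t = ∂Φ/∂z (t, y)`. Differentiating `Φ (t, z) = z + ∫₀ᵗ f (Φ (s, z)) ds` under the integral
sign gives the variational equation `A' = f'(Φ (t, y)) ∘ A` with `A 0 = id`. Two consequences: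
`t ↦ f (Φ (t, y))` solves the same linear equation as `t ↦ A t (f y)`, so `A T (f y) = f x`; and
by Liouville's formula `det (A T) = exp ∫₀ᵀ div f (Φ (t, y)) dt`.

Differentiating the return relation `Φ (τ u, D (σ u)) = σ (P u)` at `u = 0` gives
`τ'(0) f x + A T (D ∘ σ)'(0) = P'(0) σ'(0)`. Pairing with `f x` under `det2` removes the unknown
`τ'(0)`, and `det2 (A T (f y)) (A T v) = det (A T) · det2 (f y) v` finishes the computation.
-/

open Set

lemma det2_smul_right (c : ℝ) (u v : ℝ × ℝ) : det2 u (c • v) = c * det2 u v := by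
  simp only [det2, Prod.smul_fst, Prod.smul_snd, smul_eq_mul]; ring

lemma det2_smul_add_right (c : ℝ) (u v : ℝ × ℝ) : det2 u (c • u + v) = det2 u v := by
  simp only [det2, Prod.fst_add, Prod.snd_add, Prod.smul_fst, Prod.smul_snd, smul_eq_mul]; ring

lemma map_eq_fst_smul_add_snd_smul {F G : Type*} [AddCommGroup F] [Module ℝ F]
    [FunLike G (ℝ × ℝ) F] [LinearMapClass G ℝ (ℝ × ℝ) F] (C : G) (w : ℝ × ℝ) :
    C w = w.1 • C (1, 0) + w.2 • C (0, 1) := by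
  rw [← map_smul, ← map_smul, ← map_add]; simp

lemma det2_map_map (C : ℝ × ℝ →L[ℝ] ℝ × ℝ) (u v : ℝ × ℝ) :
    det2 (C u) (C v) = det2 (C (1, 0)) (C (0, 1)) * det2 u v := by
  rw [map_eq_fst_smul_add_snd_smul C u, map_eq_fst_smul_add_snd_smul C v]
  simp only [det2, Prod.fst_add, Prod.snd_add, Prod.smul_fst, Prod.smul_snd, smul_eq_mul]
  ring

lemma det2_map_left_add_det2_map_right (B : ℝ × ℝ →L[ℝ] ℝ × ℝ) (u v : ℝ × ℝ) :
    det2 (B u) v + det2 u (B v) = ((B (1, 0)).1 + (B (0, 1)).2) * det2 u v := by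
  rw [map_eq_fst_smul_add_snd_smul B u, map_eq_fst_smul_add_snd_smul B v]
  simp only [det2, Prod.fst_add, Prod.snd_add, Prod.smul_fst, Prod.smul_snd, smul_eq_mul]
  ring

lemma HasDerivAt.det2 {u v : ℝ → ℝ × ℝ} {u' v' : ℝ × ℝ} {t : ℝ}
    (hu : HasDerivAt u u' t) (hv : HasDerivAt v v' t) :
    HasDerivAt (fun s => _root_.det2 (u s) (v s))
      (_root_.det2 u' (v t) + _root_.det2 (u t) v') t := by
  have fst {w : ℝ → ℝ × ℝ} {w'} (hw : HasDerivAt w w' t) : HasDerivAt (fun s => (w s).1) w'.1 t :=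
    (ContinuousLinearMap.fst ℝ ℝ ℝ).hasFDerivAt.comp_hasDerivAt t hw
  have snd {w : ℝ → ℝ × ℝ} {w'} (hw : HasDerivAt w w' t) : HasDerivAt (fun s => (w s).2) w'.2 t :=
    (ContinuousLinearMap.snd ℝ ℝ ℝ).hasFDerivAt.comp_hasDerivAt t hw
  have := ((fst hu).mul (snd hv)).sub ((snd hu).mul (fst hv))
  exact this.congr_deriv (by simp only [_root_.det2]; ring)

lemma eq_mul_exp_integral_of_hasDerivAt {a w : ℝ → ℝ} (ha : Continuous a)
    (hw : ∀ t, HasDerivAt w (a t * w t) t) (t : ℝ) :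
    w t = w 0 * Real.exp (∫ s in (0 : ℝ)..t, a s) := by
  set I := fun t => ∫ s in (0 : ℝ)..t, a s
  have hI : ∀ t, HasDerivAt I (a t) t := fun t => (ha.integral_hasStrictDerivAt 0 t).hasDerivAt
  have hconst : ∀ t, HasDerivAt (fun s => w s * Real.exp (-I s)) 0 t := fun t =>
    ((hw t).mul (hI t).neg.exp).congr_deriv (by ring)
  have := is_const_of_deriv_eq_zero (fun s => (hconst s).differentiableAt)
    (fun s => (hconst s).deriv) t 0
  simp only [I, intervalIntegral.integral_same, neg_zero, Real.exp_zero, mul_one] at this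
  rw [← this, mul_assoc, ← Real.exp_add, neg_add_cancel, Real.exp_zero, mul_one]

lemma eq_of_hasDerivAt_clm_apply {E : Type*} [NormedAddCommGroup E] [NormedSpace ℝ E]
    {B : ℝ → E →L[ℝ] E} (hB : Continuous B) {u v : ℝ → E}
    (hu : ∀ t, HasDerivAt u (B t (u t)) t) (hv : ∀ t, HasDerivAt v (B t (v t)) t) {t₀ : ℝ}
    (h₀ : u t₀ = v t₀) : u = v := by
  ext t
  set a := min t t₀ - 1
  set b := max t t₀ + 1
  obtain ⟨C, hC⟩ := (isCompact_Icc (a := a) (b := b)).exists_bound_of_continuousOn hB.continuousOn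
  have hlip : ∀ s ∈ Ioo a b, LipschitzOnWith (Real.toNNReal C) (B s) univ := fun s hs =>
    ((B s).lipschitz.weaken
      (NNReal.le_toNNReal_of_coe_le (hC s (Ioo_subset_Icc_self hs)))).lipschitzOnWith
  exact ODE_solution_unique_of_mem_Ioo hlip ⟨by grind, by grind⟩
    (fun s _ => ⟨hu s, trivial⟩) (fun s _ => ⟨hv s, trivial⟩) h₀ ⟨by grind, by grind⟩

section PartialDerivative

variable {E F : Type*} [NormedAddCommGroup E] [NormedSpace ℝ E]
  [NormedAddCommGroup F] [NormedSpace ℝ F]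

noncomputable def fderivSnd (g : ℝ × E → F) (p : ℝ × E) : E →L[ℝ] F :=
  (fderiv ℝ g p).comp (ContinuousLinearMap.inr ℝ ℝ E)

lemma DifferentiableAt.hasFDerivAt_fderivSnd {g : ℝ × E → F} {t : ℝ} {y : E}
    (hg : DifferentiableAt ℝ g (t, y)) :
    HasFDerivAt (fun z => g (t, z)) (fderivSnd g (t, y)) y :=
  hg.hasFDerivAt.comp y (hasFDerivAt_prodMk_right t y)

lemma fderiv_apply_eq_smul_add_fderivSnd {g : ℝ × E → F} {t : ℝ} {y : E} {g' : F}
    (hg : DifferentiableAt ℝ g (t, y)) (ht : HasDerivAt (fun s => g (s, y)) g' t)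
    (a : ℝ) (v : E) : fderiv ℝ g (t, y) (a, v) = a • g' + fderivSnd g (t, y) v := by
  have hfst : fderiv ℝ g (t, y) (1, 0) = g' :=
    (hg.hasFDerivAt.comp_hasDerivAt t ((hasDerivAt_id t).prodMk (hasDerivAt_const t y))).unique ht
  rw [show ((a, v) : ℝ × E) = a • ((1 : ℝ), (0 : E)) + ((0 : ℝ), v) by simp, map_add, map_smul,
    hfst]
  rfl

lemma smul_add_fderivSnd_eq_of_eventuallyEq {g : ℝ × E → F} {τ P : ℝ → ℝ} {w : ℝ → E}
    {σ : ℝ → F} {u₀ t : ℝ} {y : E} {g' σ' : F} {τ' P' : ℝ} {w' : E}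
    (hg : DifferentiableAt ℝ g (t, y)) (hgt : HasDerivAt (fun s => g (s, y)) g' t)
    (hτ : HasDerivAt τ τ' u₀) (hw : HasDerivAt w w' u₀) (hσ : HasDerivAt σ σ' (P u₀))
    (hP : HasDerivAt P P' u₀) (hτ₀ : τ u₀ = t) (hw₀ : w u₀ = y)
    (h : (fun u => g (τ u, w u)) =ᶠ[𝓝 u₀] fun u => σ (P u)) :
    τ' • g' + fderivSnd g (t, y) w' = P' • σ' := by
  have hg' : HasFDerivAt g (fderiv ℝ g (t, y)) (τ u₀, w u₀) := by
    rw [hτ₀, hw₀]; exact hg.hasFDerivAt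
  rw [← fderiv_apply_eq_smul_add_fderivSnd hg hgt]
  exact (hg'.comp_hasDerivAt u₀ (hτ.prodMk hw)).unique
    ((hσ.scomp u₀ hP).congr_of_eventuallyEq h)

lemma ContDiffOn.continuous_fderivSnd_comp_prodMk {g : ℝ × E → F} {X : Set E} (hX : IsOpen X)
    (hg : ContDiffOn ℝ 1 g (univ ×ˢ X)) {y : E} (hy : y ∈ X) :
    Continuous fun s => fderivSnd g (s, y) :=
  ((hg.continuousOn_fderiv_of_isOpen (isOpen_univ.prod hX) le_rfl).comp_continuous
    (continuous_id.prodMk continuous_const) fun _ => ⟨trivial, hy⟩).clm_comp_const _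

lemma hasFDerivAt_intervalIntegral_of_contDiffOn [ProperSpace E] [CompleteSpace F]
    {g : ℝ × E → F} {X : Set E} (hX : IsOpen X) (hg : ContDiffOn ℝ 1 g (univ ×ˢ X))
    {y : E} (hy : y ∈ X) (a b : ℝ) :
    HasFDerivAt (fun z => ∫ s in a..b, g (s, z)) (∫ s in a..b, fderivSnd g (s, y)) y := by
  have hO : IsOpen (univ ×ˢ X : Set (ℝ × E)) := isOpen_univ.prod hX
  have hdiff : ∀ s, ∀ z ∈ X, DifferentiableAt ℝ g (s, z) := fun s z hz =>
    (hg.differentiableOn one_ne_zero).differentiableAt (hO.mem_nhds ⟨trivial, hz⟩)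
  have hcont : ∀ z ∈ X, Continuous fun s => g (s, z) := fun z hz =>
    hg.continuousOn.comp_continuous (continuous_id.prodMk continuous_const) fun _ => ⟨trivial, hz⟩
  obtain ⟨r, hr, hrX⟩ := Metric.nhds_basis_closedBall.mem_iff.1 (hX.mem_nhds hy)
  obtain ⟨C, hC⟩ := ((isCompact_uIcc (a := a) (b := b)).prod
    (isCompact_closedBall y r)).exists_bound_of_continuousOn
    ((hg.continuousOn_fderiv_of_isOpen hO le_rfl).mono fun p hp => ⟨trivial, hrX hp.2⟩)
  refine intervalIntegral.hasFDerivAt_integral_of_dominated_of_fderiv_le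
    (F' := fun z s => fderivSnd g (s, z)) (bound := fun _ => C) (Metric.ball_mem_nhds y hr)
    ?_ ((hcont y hy).intervalIntegrable a b)
    (hg.continuous_fderivSnd_comp_prodMk hX hy).aestronglyMeasurable ?_ intervalIntegrable_const
    (MeasureTheory.ae_of_all _ fun s _ z hz =>
      (hdiff s z (hrX (Metric.ball_subset_closedBall hz))).hasFDerivAt_fderivSnd)
  · filter_upwards [hX.mem_nhds hy] with z hz using (hcont z hz).aestronglyMeasurable
  · refine MeasureTheory.ae_of_all _ fun s hs z hz => ?_
    calc ‖fderivSnd g (s, z)‖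
        ≤ ‖fderiv ℝ g (s, z)‖ * ‖ContinuousLinearMap.inr ℝ ℝ E‖ :=
          ContinuousLinearMap.opNorm_comp_le _ _
      _ ≤ ‖fderiv ℝ g (s, z)‖ := by
          grw [ContinuousLinearMap.norm_inr_le_one, mul_one]
      _ ≤ C := hC (s, z) ⟨uIoc_subset_uIcc hs, Metric.ball_subset_closedBall hz⟩

end PartialDerivative

section Flow

variable {E : Type*} [NormedAddCommGroup E] [NormedSpace ℝ E]

/-- Only the defining ODE is required: the group law `Φ (t + s, z) = Φ (t, Φ (s, z))` is not. -/
structure IsFlowOn (f : E → E) (Φ : ℝ × E → E) (X : Set E) : Prop where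
  mapsTo : ∀ t, ∀ z ∈ X, Φ (t, z) ∈ X
  hasDerivAt : ∀ t, ∀ z ∈ X, HasDerivAt (fun s => Φ (s, z)) (f (Φ (t, z))) t
  zero : ∀ z ∈ X, Φ (0, z) = z

namespace IsFlowOn

variable {f : E → E} {Φ : ℝ × E → E} {X : Set E} {y : E}

lemma continuous_orbit (hΦ : IsFlowOn f Φ X) (hy : y ∈ X) : Continuous fun t => Φ (t, y) :=
  continuous_iff_continuousAt.2 fun t => (hΦ.hasDerivAt t y hy).continuousAt

lemma eq_add_integral [CompleteSpace E] (hΦ : IsFlowOn f Φ X) (hf : ContinuousOn f X)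
    (hy : y ∈ X) (t : ℝ) : Φ (t, y) = y + ∫ s in (0 : ℝ)..t, f (Φ (s, y)) := by
  have hcont : Continuous fun s => f (Φ (s, y)) :=
    hf.comp_continuous (hΦ.continuous_orbit hy) fun s => hΦ.mapsTo s y hy
  rw [intervalIntegral.integral_eq_sub_of_hasDerivAt (fun s _ => hΦ.hasDerivAt s y hy)
    (hcont.intervalIntegrable 0 t), hΦ.zero y hy, add_sub_cancel]

lemma continuous_fderiv_orbit (hΦ : IsFlowOn f Φ X) (hX : IsOpen X) (hf : ContDiffOn ℝ 1 f X)
    (hy : y ∈ X) : Continuous fun t => fderiv ℝ f (Φ (t, y)) :=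
  (hf.continuousOn_fderiv_of_isOpen hX le_rfl).comp_continuous (hΦ.continuous_orbit hy)
    fun t => hΦ.mapsTo t y hy

lemma fderivSnd_zero (hΦ : IsFlowOn f Φ X) (hX : IsOpen X)
    (hΦC1 : ContDiffOn ℝ 1 Φ (univ ×ˢ X)) (hy : y ∈ X) :
    fderivSnd Φ (0, y) = ContinuousLinearMap.id ℝ E := by
  have hΦdiff : DifferentiableAt ℝ Φ (0, y) := (hΦC1.differentiableOn one_ne_zero).differentiableAt
    ((isOpen_univ.prod hX).mem_nhds ⟨trivial, hy⟩)
  refine hΦdiff.hasFDerivAt_fderivSnd.unique ((hasFDerivAt_id y).congr_of_eventuallyEq ?_)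
  filter_upwards [hX.mem_nhds hy] with z hz using hΦ.zero z hz

variable [ProperSpace E]

lemma fderivSnd_eq_id_add_integral (hΦ : IsFlowOn f Φ X) (hX : IsOpen X)
    (hf : ContDiffOn ℝ 1 f X) (hΦC1 : ContDiffOn ℝ 1 Φ (univ ×ˢ X)) (hy : y ∈ X) (t : ℝ) :
    fderivSnd Φ (t, y) = ContinuousLinearMap.id ℝ E +
      ∫ s in (0 : ℝ)..t, (fderiv ℝ f (Φ (s, y))).comp (fderivSnd Φ (s, y)) := by
  have hO : IsOpen (univ ×ˢ X : Set (ℝ × E)) := isOpen_univ.prod hX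
  have hΦdiff : ∀ s, DifferentiableAt ℝ Φ (s, y) := fun s =>
    (hΦC1.differentiableOn one_ne_zero).differentiableAt (hO.mem_nhds ⟨trivial, hy⟩)
  have hfΦ : ContDiffOn ℝ 1 (fun p => f (Φ p)) (univ ×ˢ X) :=
    hf.comp hΦC1 fun p hp => hΦ.mapsTo p.1 p.2 hp.2
  have hchain : ∀ s, fderivSnd (fun p => f (Φ p)) (s, y) =
      (fderiv ℝ f (Φ (s, y))).comp (fderivSnd Φ (s, y)) := fun s =>
    HasFDerivAt.unique
      ((hfΦ.differentiableOn one_ne_zero).differentiableAt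
        (hO.mem_nhds ⟨trivial, hy⟩)).hasFDerivAt_fderivSnd
      ((((hf.differentiableOn one_ne_zero).differentiableAt
        (hX.mem_nhds (hΦ.mapsTo s y hy))).hasFDerivAt).comp y (hΦdiff s).hasFDerivAt_fderivSnd)
  have hint := hasFDerivAt_intervalIntegral_of_contDiffOn hX hfΦ hy 0 t
  simp only [hchain] at hint
  refine (hΦdiff t).hasFDerivAt_fderivSnd.unique
    (((hasFDerivAt_id y).add hint).congr_of_eventuallyEq ?_)
  filter_upwards [hX.mem_nhds hy] with z hz using hΦ.eq_add_integral hf.continuousOn hz t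

lemma hasDerivAt_fderivSnd (hΦ : IsFlowOn f Φ X) (hX : IsOpen X)
    (hf : ContDiffOn ℝ 1 f X) (hΦC1 : ContDiffOn ℝ 1 Φ (univ ×ˢ X)) (hy : y ∈ X) (t : ℝ) :
    HasDerivAt (fun t => fderivSnd Φ (t, y))
      ((fderiv ℝ f (Φ (t, y))).comp (fderivSnd Φ (t, y))) t := by
  have hcont : Continuous fun s => (fderiv ℝ f (Φ (s, y))).comp (fderivSnd Φ (s, y)) :=
    (hΦ.continuous_fderiv_orbit hX hf hy).clm_comp (hΦC1.continuous_fderivSnd_comp_prodMk hX hy)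
  rw [funext (hΦ.fderivSnd_eq_id_add_integral hX hf hΦC1 hy)]
  exact (hcont.integral_hasStrictDerivAt 0 t).hasDerivAt.const_add _

lemma fderivSnd_apply_self (hΦ : IsFlowOn f Φ X) (hX : IsOpen X)
    (hf : ContDiffOn ℝ 1 f X) (hΦC1 : ContDiffOn ℝ 1 Φ (univ ×ˢ X)) (hy : y ∈ X) (t : ℝ) :
    fderivSnd Φ (t, y) (f y) = f (Φ (t, y)) := by
  refine congrFun (eq_of_hasDerivAt_clm_apply (hΦ.continuous_fderiv_orbit hX hf hy)
    (u := fun t => fderivSnd Φ (t, y) (f y)) (v := fun t => f (Φ (t, y))) (t₀ := 0)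
    (fun s => ?_) (fun s => ?_) ?_) t
  · simpa using (hΦ.hasDerivAt_fderivSnd hX hf hΦC1 hy s).clm_apply (hasDerivAt_const s (f y))
  · exact ((hf.differentiableOn one_ne_zero).differentiableAt
      (hX.mem_nhds (hΦ.mapsTo s y hy))).hasFDerivAt.comp_hasDerivAt s (hΦ.hasDerivAt s y hy)
  · simp [hΦ.fderivSnd_zero hX hΦC1 hy, hΦ.zero y hy]

end IsFlowOn

end Flow

lemma IsFlowOn.det2_fderivSnd_apply {f : ℝ × ℝ → ℝ × ℝ} {Φ : ℝ × (ℝ × ℝ) → ℝ × ℝ}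
    {X : Set (ℝ × ℝ)} (hΦ : IsFlowOn f Φ X) (hX : IsOpen X) (hf : ContDiffOn ℝ 1 f X)
    (hΦC1 : ContDiffOn ℝ 1 Φ (univ ×ˢ X)) {y : ℝ × ℝ} (hy : y ∈ X) (t : ℝ) (u v : ℝ × ℝ) :
    det2 (fderivSnd Φ (t, y) u) (fderivSnd Φ (t, y) v) =
      Real.exp (∫ s in (0 : ℝ)..t, divergence2 f (Φ (s, y))) * det2 u v := by
  have hB := hΦ.continuous_fderiv_orbit hX hf hy
  have hdiv : Continuous fun s => divergence2 f (Φ (s, y)) :=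
    (continuous_fst.comp (hB.clm_apply continuous_const)).add
      (continuous_snd.comp (hB.clm_apply continuous_const))
  have hW : ∀ s, HasDerivAt (fun s => det2 (fderivSnd Φ (s, y) (1, 0)) (fderivSnd Φ (s, y) (0, 1)))
      (divergence2 f (Φ (s, y)) * det2 (fderivSnd Φ (s, y) (1, 0)) (fderivSnd Φ (s, y) (0, 1)))
      s := fun s => by
    have hA := hΦ.hasDerivAt_fderivSnd hX hf hΦC1 hy s
    convert (hA.clm_apply (hasDerivAt_const s (1, 0))).det2
      (hA.clm_apply (hasDerivAt_const s (0, 1))) using 1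
    simpa [divergence2] using (det2_map_left_add_det2_map_right _ _ _).symm
  rw [det2_map_map, eq_mul_exp_integral_of_hasDerivAt hdiv hW t, hΦ.fderivSnd_zero hX hΦC1 hy]
  simp [det2]

theorem hybrid_poincare_map_derivative_general
    (X : Set (ℝ × ℝ)) (hX : IsOpen X)
    (f : ℝ × ℝ → ℝ × ℝ) (hf : ContDiffOn ℝ 1 f X)
    (Φ : ℝ × (ℝ × ℝ) → ℝ × ℝ)
    (hΦC1 : ContDiffOn ℝ 1 Φ (Set.univ ×ˢ X))
    (hΦmaps : ∀ t : ℝ, ∀ z ∈ X, Φ (t, z) ∈ X)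
    (hΦflow : ∀ t : ℝ, ∀ z ∈ X, HasDerivAt (fun s => Φ (s, z)) (f (Φ (t, z))) t)
    (hΦ0 : ∀ z ∈ X, Φ (0, z) = z)
    (x y : ℝ × ℝ) (hxX : x ∈ X) (hyX : y ∈ X)
    (T : ℝ) (hreach : Φ (T, y) = x)
    (ε : ℝ) (hε : 0 < ε)
    (σ : ℝ → ℝ × ℝ) (hσC1 : ContDiffOn ℝ 1 σ (Set.Ioo (-ε) ε))
    (hσ0 : σ 0 = x) (hσreg : det2 (f x) (deriv σ 0) ≠ 0)
    (D : ℝ × ℝ → ℝ × ℝ) (hD : ContDiffOn ℝ 1 D X)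
    (hDx : D x = y)
    (τ P : ℝ → ℝ) (hτ : DifferentiableAt ℝ τ 0) (hP : DifferentiableAt ℝ P 0)
    (hτ0 : τ 0 = T) (hP0 : P 0 = 0)
    (hret : ∀ u ∈ Set.Ioo (-ε) ε, Φ (τ u, D (σ u)) = σ (P u)) :
    deriv P 0 =
      (det2 (f y) (deriv (D ∘ σ) 0) / det2 (f x) (deriv σ 0)) *
        Real.exp (∫ t in (0:ℝ)..T, divergence2 f (Φ (t, y))) := by
  have hflow : IsFlowOn f Φ X := ⟨hΦmaps, hΦflow, hΦ0⟩
  have h0 : (0 : ℝ) ∈ Ioo (-ε) ε := ⟨neg_lt_zero.2 hε, hε⟩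
  have hσ : HasDerivAt σ (deriv σ 0) 0 :=
    ((hσC1.contDiffAt (isOpen_Ioo.mem_nhds h0)).differentiableAt one_ne_zero).hasDerivAt
  have hDσ : HasDerivAt (D ∘ σ) (deriv (D ∘ σ) 0) 0 :=
    (((hD.contDiffAt (hX.mem_nhds (hσ0 ▸ hxX))).differentiableAt one_ne_zero).comp 0
      hσ.differentiableAt).hasDerivAt
  have hΦT : DifferentiableAt ℝ Φ (T, y) :=
    (hΦC1.contDiffAt ((isOpen_univ.prod hX).mem_nhds ⟨trivial, hyX⟩)).differentiableAt one_ne_zero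
  have hreturn := smul_add_fderivSnd_eq_of_eventuallyEq hΦT (hreach ▸ hΦflow T y hyX)
    hτ.hasDerivAt hDσ (by rwa [hP0]) hP.hasDerivAt hτ0 (by simp [hσ0, hDx])
    (eventually_of_mem (isOpen_Ioo.mem_nhds h0) hret)
  have hdet : deriv P 0 * det2 (f x) (deriv σ 0) =
      Real.exp (∫ t in (0 : ℝ)..T, divergence2 f (Φ (t, y))) * det2 (f y) (deriv (D ∘ σ) 0) :=
    calc deriv P 0 * det2 (f x) (deriv σ 0)
        = det2 (f x) (fderivSnd Φ (T, y) (deriv (D ∘ σ) 0)) := by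
          rw [← det2_smul_right, ← hreturn, det2_smul_add_right]
      _ = det2 (fderivSnd Φ (T, y) (f y)) (fderivSnd Φ (T, y) (deriv (D ∘ σ) 0)) := by
          rw [hflow.fderivSnd_apply_self hX hf hΦC1 hyX, hreach]
      _ = _ := hflow.det2_fderivSnd_apply hX hf hΦC1 hyX T _ _
  rw [div_mul_eq_mul_div, eq_div_iff hσreg, hdet]
  ring

/-- Derivative of the hybrid Poincaré return map (paper's Theorem `th:stability`,
coordinate-free form): with impact `D x = y` and continuous flow segment from `y`
back to `x ∈ S` of duration `T`, the return map `P` in the coordinate `u` of a regular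
parametrization `σ` of `S` satisfies
`P'(0) = det(f(y), (D∘σ)'(0)) / det(f(x), σ'(0)) · exp ∫₀ᵀ div f (Φ(t,y)) dt`. -/
theorem hybrid_poincare_map_derivative
    (X : Set (ℝ × ℝ)) (hX : IsOpen X)
    (f : ℝ × ℝ → ℝ × ℝ) (hf : ContDiffOn ℝ 1 f X)
    (Φ : ℝ × (ℝ × ℝ) → ℝ × ℝ)
    (hΦC1 : ContDiffOn ℝ 1 Φ (Set.univ ×ˢ X))
    (hΦmaps : ∀ t : ℝ, ∀ z ∈ X, Φ (t, z) ∈ X)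
    (hΦflow : ∀ t : ℝ, ∀ z ∈ X, HasDerivAt (fun s => Φ (s, z)) (f (Φ (t, z))) t)
    (hΦ0 : ∀ z ∈ X, Φ (0, z) = z)
    (x y : ℝ × ℝ) (hxX : x ∈ X) (hyX : y ∈ X)
    (hfx : f x ≠ 0) (hfy : f y ≠ 0)
    (T : ℝ) (hT : 0 < T) (hreach : Φ (T, y) = x)
    (ε : ℝ) (hε : 0 < ε)
    (σ : ℝ → ℝ × ℝ) (hσC1 : ContDiffOn ℝ 1 σ (Set.Ioo (-ε) ε))
    (hσmaps : Set.MapsTo σ (Set.Ioo (-ε) ε) X)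
    (hσ0 : σ 0 = x) (hσreg : det2 (f x) (deriv σ 0) ≠ 0)
    (D : ℝ × ℝ → ℝ × ℝ) (hD : ContDiffOn ℝ 1 D X) (hDmaps : Set.MapsTo D X X)
    (hDx : D x = y)
    (τ P : ℝ → ℝ) (hτ : DifferentiableAt ℝ τ 0) (hP : DifferentiableAt ℝ P 0)
    (hτ0 : τ 0 = T) (hP0 : P 0 = 0)
    (hret : ∀ u ∈ Set.Ioo (-ε) ε, Φ (τ u, D (σ u)) = σ (P u)) :
    deriv P 0 =
      (det2 (f y) (deriv (D ∘ σ) 0) / det2 (f x) (deriv σ 0)) *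
        Real.exp (∫ t in (0:ℝ)..T, divergence2 f (Φ (t, y))) :=
  hybrid_poincare_map_derivative_general X hX f hf Φ hΦC1 hΦmaps hΦflow hΦ0 x y hxX hyX T hreach ε
    hε σ hσC1 hσ0 hσreg D hD hDx τ P hτ hP hτ0 hP0 hret
end

section
/- Let P : ℝⁿ → ℝⁿ be continuously differentiable, let x* be a fixed point of P (P(x*) = x*), and suppose |det DP(x*)| > 1. Then x* is not a Lyapunov stable fixed point of the discrete dynamical system x_{k+1} = P(x_k): it is not the case that for every ε > 0 there exists δ > 0 such that ‖y − x*‖ < δ implies ‖P^k(y) − x*‖ < ε for all k ≥ 0. -/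
/-!
Near `x*` the map `P` is injective (inverse function theorem) and expands volume by a factor
`c > 1`, by the change of variables formula. If `x*` were stable, a small ball around `x*` would
have all its forward images inside a fixed ball `B`; their volumes grow at least like `cᵏ`,
which is impossible since `B` has finite volume.
-/

open Function MeasureTheory Metric Filter Topology Set

theorem ENNReal.exists_lt_pow_mul {r a M : ENNReal} (hr : 1 < r) (ha : a ≠ 0) (hM : M ≠ ⊤) :
    ∃ k : ℕ, M < r ^ k * a := by
  have h : Tendsto (fun k : ℕ => r ^ k * a) atTop (𝓝 (⊤ * a)) :=
    ENNReal.Tendsto.mul_const (ENNReal.tendsto_pow_atTop_nhds_top_iff.2 hr)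
      (Or.inl ENNReal.top_ne_zero)
  rw [ENNReal.top_mul ha] at h
  exact (h.eventually (lt_mem_nhds hM.lt_top)).exists

section Expansion

variable {E : Type*} [NormedAddCommGroup E] [NormedSpace ℝ E] [FiniteDimensional ℝ E]
  [MeasurableSpace E] [BorelSpace E] (μ : Measure E) [μ.IsAddHaarMeasure]
  {f : E → E} {f' : E → E →L[ℝ] E} {s B V : Set E} {c : ℝ}

theorem ofReal_mul_le_addHaar_image_of_le_abs_det (hs : MeasurableSet s)
    (hf' : ∀ x ∈ s, HasFDerivWithinAt f (f' x) s x) (hf : InjOn f s)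
    (hc : ∀ x ∈ s, c ≤ |(f' x).det|) :
    ENNReal.ofReal c * μ s ≤ μ (f '' s) :=
  calc ENNReal.ofReal c * μ s = ∫⁻ _ in s, ENNReal.ofReal c ∂μ := (setLIntegral_const _ _).symm
    _ ≤ ∫⁻ x in s, ENNReal.ofReal |(f' x).det| ∂μ :=
        setLIntegral_mono' hs fun x hx => ENNReal.ofReal_le_ofReal (hc x hx)
    _ = μ (f '' s) := lintegral_abs_det_fderiv_eq_addHaar_image μ hs hf' hf

theorem measurableSet_iterate_image_and_pow_mul_le (hf' : ∀ x ∈ B, HasFDerivAt f (f' x) x)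
    (hf : InjOn f B) (hc : ∀ x ∈ B, c ≤ |(f' x).det|) (hV : MeasurableSet V)
    (hVB : ∀ k, f^[k] '' V ⊆ B) (k : ℕ) :
    MeasurableSet (f^[k] '' V) ∧ ENNReal.ofReal c ^ k * μ V ≤ μ (f^[k] '' V) := by
  induction k with
  | zero => simpa using hV
  | succ k ih =>
    obtain ⟨hmeas, hle⟩ := ih
    have hsub := hVB k
    have hf's : ∀ x ∈ f^[k] '' V, HasFDerivWithinAt f (f' x) (f^[k] '' V) x :=
      fun x hx => (hf' x (hsub hx)).hasFDerivWithinAt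
    rw [iterate_succ', image_comp]
    refine ⟨measurable_image_of_fderivWithin hmeas hf's (hf.mono hsub), ?_⟩
    calc ENNReal.ofReal c ^ (k + 1) * μ V = ENNReal.ofReal c * (ENNReal.ofReal c ^ k * μ V) := by
          ring
      _ ≤ ENNReal.ofReal c * μ (f^[k] '' V) := by gcongr
      _ ≤ μ (f '' (f^[k] '' V)) :=
          ofReal_mul_le_addHaar_image_of_le_abs_det μ hmeas hf's (hf.mono hsub)
            fun x hx => hc x (hsub hx)

theorem not_forall_iterate_image_subset_of_one_lt (hf' : ∀ x ∈ B, HasFDerivAt f (f' x) x)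
    (hf : InjOn f B) (hc1 : 1 < c) (hc : ∀ x ∈ B, c ≤ |(f' x).det|) (hB : μ B ≠ ⊤)
    (hV : MeasurableSet V) (hV0 : μ V ≠ 0) :
    ¬ ∀ k, f^[k] '' V ⊆ B := by
  intro hVB
  obtain ⟨k, hk⟩ := ENNReal.exists_lt_pow_mul (ENNReal.one_lt_ofReal.2 hc1) hV0 hB
  exact hk.not_ge <|
    (measurableSet_iterate_image_and_pow_mul_le μ hf' hf hc hV hVB k).2.trans (measure_mono (hVB k))

end Expansion

section Local

variable {E : Type*} [NormedAddCommGroup E] [NormedSpace ℝ E] [FiniteDimensional ℝ E]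
  {f : E → E} {a : E}

theorem HasStrictFDerivAt.exists_mem_nhds_injOn {f' : E →L[ℝ] E} (hf : HasStrictFDerivAt f f' a)
    (h : f'.det ≠ 0) : ∃ U ∈ 𝓝 a, InjOn f U := by
  have he : HasStrictFDerivAt f (f'.toContinuousLinearEquivOfDetNeZero h : E →L[ℝ] E) a := by
    simpa using hf
  refine ⟨_, (he.toOpenPartialHomeomorph f).open_source.mem_nhds
    he.mem_toOpenPartialHomeomorph_source, ?_⟩
  simpa using (he.toOpenPartialHomeomorph f).injOn

theorem ContDiff.exists_ball_injOn_and_lt_abs_det {c : ℝ} (hf : ContDiff ℝ 1 f) (hc0 : 0 ≤ c)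
    (hc : c < |(fderiv ℝ f a).det|) :
    ∃ r > 0, InjOn f (ball a r) ∧ ∀ x ∈ ball a r, c < |(fderiv ℝ f x).det| := by
  obtain ⟨U, hU, hinj⟩ := (hf.contDiffAt.hasStrictFDerivAt one_ne_zero).exists_mem_nhds_injOn
    (abs_pos.1 (hc0.trans_lt hc))
  have hdet : ∀ᶠ x in 𝓝 a, c < |(fderiv ℝ f x).det| :=
    (continuous_abs.comp (ContinuousLinearMap.continuous_det.comp
      (hf.continuous_fderiv one_ne_zero))).continuousAt.eventually (lt_mem_nhds hc)
  obtain ⟨r, hr, hball⟩ := Metric.mem_nhds_iff.1 (inter_mem hU hdet)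
  exact ⟨r, hr, hinj.mono fun x hx => (hball hx).1, fun x hx => (hball hx).2⟩

end Local

theorem det_gt_one_not_lyapunov_stable_general
    (n : ℕ) (P : (Fin n → ℝ) → (Fin n → ℝ)) (hP : ContDiff ℝ 1 P)
    (xs : Fin n → ℝ)
    (hdet : 1 < |(fderiv ℝ P xs).det|) :
    ¬ (∀ ε > 0, ∃ δ > 0, ∀ y : Fin n → ℝ,
        ‖y - xs‖ < δ → ∀ k : ℕ, ‖P^[k] y - xs‖ < ε) := by
  intro hstable
  obtain ⟨c, hc1, hc⟩ := exists_between hdet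
  obtain ⟨r, hr, hinj, hdet_ball⟩ := hP.exists_ball_injOn_and_lt_abs_det (zero_le_one.trans hc1.le) hc
  obtain ⟨δ, hδ, hstay⟩ := hstable r hr
  refine not_forall_iterate_image_subset_of_one_lt volume
    (fun x _ => (hP.differentiable one_ne_zero x).hasFDerivAt) hinj hc1
    (fun x hx => (hdet_ball x hx).le) measure_ball_lt_top.ne isOpen_ball.measurableSet
    (measure_ball_pos volume xs hδ).ne' ?_
  rintro k _ ⟨y, hy, rfl⟩
  simpa [dist_eq_norm] using hstay y (by simpa [dist_eq_norm] using hy) k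

/-- If a `C¹` map `P : ℝⁿ → ℝⁿ` has a fixed point `x*` with `|det DP(x*)| > 1`, then
`x*` is not a Lyapunov stable fixed point of the discrete system `x_{k+1} = P(x_k)`. -/
theorem det_gt_one_not_lyapunov_stable
    (n : ℕ) (P : (Fin n → ℝ) → (Fin n → ℝ)) (hP : ContDiff ℝ 1 P)
    (xs : Fin n → ℝ) (hfix : P xs = xs)
    (hdet : 1 < |(fderiv ℝ P xs).det|) :
    ¬ (∀ ε > 0, ∃ δ > 0, ∀ y : Fin n → ℝ,
        ‖y - xs‖ < δ → ∀ k : ℕ, ‖P^[k] y - xs‖ < ε) :=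
  det_gt_one_not_lyapunov_stable_general n P hP xs hdet
end
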